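/- Under the truncated regression model, if E[‖X Xᵀ‖] < ∞ (e.g. if E[X Xᵀ] exists and is finite entrywise), then there exists a neighborhood N of the true parameter (δ₀, γ₀) in ℝ^K × (0, ∞) such that E[ sup_{(δ,γ) ∈ N} ‖H(Y, X; δ, γ)‖ ] < ∞, where the supremum of the Frobenius norm of the Hessian over N is taken pointwise in the sample (Y, X). (This is the local dominance condition on the Hessian for the truncated regression model.) -/

import Mathlib

open MeasureTheory ProbabilityTheory Real Filter Set

noncomputable section

/-- The standard normal density `φ`. -/
def gPDF (t : ℝ) : ℝ := (Real.sqrt (2 * Real.pi))⁻¹ * Real.exp (-t ^ 2 / 2)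

/-- The standard normal cumulative distribution function `Φ`. -/
def gCDF (t : ℝ) : ℝ := ∫ s in Set.Iic t, gPDF s

/-- The inverse Mills ratio `λ(v) = φ(v)/(1 - Φ(v))`. -/
def mills (v : ℝ) : ℝ := gPDF v / (1 - gCDF v)

/-- Euclidean norm of a vector in `ℝ^n`. -/
def vnorm {n : ℕ} (x : Fin n → ℝ) : ℝ := Real.sqrt (∑ i, (x i) ^ 2)

/-- Frobenius (Euclidean) norm of a real matrix. -/
def frob {m n : Type*} [Fintype m] [Fintype n] (M : Matrix m n ℝ) : ℝ :=
  Real.sqrt (∑ i, ∑ j, (M i j) ^ 2)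

/-- Dot product `xᵀδ`. -/
def dotp {n : ℕ} (x δ : Fin n → ℝ) : ℝ := ∑ i, x i * δ i

/-- The block matrix `[[x xᵀ, -y·x], [-y·xᵀ, γ⁻² + y²]]`. -/
def blockA (K : ℕ) (x : Fin K → ℝ) (y γ : ℝ) :
    Matrix (Fin K ⊕ Unit) (Fin K ⊕ Unit) ℝ :=
  Matrix.fromBlocks (Matrix.vecMulVec x x) (Matrix.of fun i _ => -(y * x i))
    (Matrix.of fun _ j => -(y * x j)) (Matrix.of fun _ _ => γ⁻¹ ^ 2 + y ^ 2)

/-- The block matrix `[[x xᵀ, -c·x], [-c·xᵀ, c²]]`. -/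
def blockB (K : ℕ) (x : Fin K → ℝ) (c : ℝ) :
    Matrix (Fin K ⊕ Unit) (Fin K ⊕ Unit) ℝ :=
  Matrix.fromBlocks (Matrix.vecMulVec x x) (Matrix.of fun i _ => -(c * x i))
    (Matrix.of fun _ j => -(c * x j)) (Matrix.of fun _ _ => c ^ 2)

/-- The Hessian of the reparameterized log conditional likelihood of the truncated
regression model, `H(y, x; δ, γ)` with `v = γc - xᵀδ`. -/
def truncHess (K : ℕ) (c y : ℝ) (x δ : Fin K → ℝ) (γ : ℝ) :
    Matrix (Fin K ⊕ Unit) (Fin K ⊕ Unit) ℝ :=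
  -(blockA K x y γ) +
    (mills (γ * c - dotp x δ) * (mills (γ * c - dotp x δ) - (γ * c - dotp x δ))) • blockB K x c

/-- The Hessian of the reparameterized log conditional likelihood of the Tobit model,
`H(y, x, d; δ, γ)` with `v = γc - xᵀδ`. -/
def tobitHess (K : ℕ) (c y : ℝ) (x : Fin K → ℝ) (d : ℝ) (δ : Fin K → ℝ) (γ : ℝ) :
    Matrix (Fin K ⊕ Unit) (Fin K ⊕ Unit) ℝ :=
  -((1 - d) • blockA K x y γ) -
    (d * mills (-(γ * c - dotp x δ)) * (mills (-(γ * c - dotp x δ)) + (γ * c - dotp x δ))) •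
      blockB K x c

/-- The score of the reparameterized log conditional likelihood of the Tobit model,
`s(y, x, d; δ, γ)` with `v = γc - xᵀδ`. -/
def tobitScore (K : ℕ) (c y : ℝ) (x : Fin K → ℝ) (d : ℝ) (δ : Fin K → ℝ) (γ : ℝ) :
    Fin K ⊕ Unit → ℝ := fun j =>
  (1 - d) *
      Sum.elim (fun i => (γ * y - dotp x δ) * x i) (fun _ => 1 / γ - (γ * y - dotp x δ) * y) j
    + d * mills (-(γ * c - dotp x δ)) * Sum.elim (fun i => -x i) (fun _ => c) j


lemma gPDF_pos (t : ℝ) : 0 < gPDF t := by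
  unfold gPDF
  positivity

lemma gPDF_eq (t : ℝ) : gPDF t = (Real.sqrt (2 * Real.pi))⁻¹ * Real.exp (-(1/2) * t ^ 2) := by
  unfold gPDF; ring_nf

lemma continuous_gPDF : Continuous gPDF := by
  unfold gPDF; fun_prop

lemma integrable_gPDF : Integrable gPDF := by
  rw [show gPDF = fun t => (Real.sqrt (2 * Real.pi))⁻¹ * Real.exp (-(1/2) * t ^ 2) from funext gPDF_eq]
  exact (integrable_exp_neg_mul_sq (by norm_num : (0:ℝ) < 1/2)).const_mul _

lemma integral_gPDF : ∫ t, gPDF t = 1 := by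
  rw [show gPDF = fun t => (Real.sqrt (2 * Real.pi))⁻¹ * Real.exp (-(1/2) * t ^ 2) from funext gPDF_eq]
  rw [integral_const_mul, integral_gaussian]
  rw [show Real.pi / (1/2) = 2 * Real.pi by ring]
  rw [inv_mul_cancel₀]
  positivity

lemma integrable_mul_gPDF : Integrable (fun t => t * gPDF t) := by
  have h := (integrable_mul_exp_neg_mul_sq (by norm_num : (0:ℝ) < 1/2)).const_mul
    ((Real.sqrt (2 * Real.pi))⁻¹)
  refine h.congr (Filter.Eventually.of_forall fun t => ?_)
  simp only []
  rw [gPDF_eq t]; ring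

lemma integrable_sq_mul_gPDF : Integrable (fun t => t ^ 2 * gPDF t) := by
  have h := (integrable_rpow_mul_exp_neg_mul_sq (by norm_num : (0:ℝ) < 1/2)
    (by norm_num : (-1:ℝ) < 2)).const_mul ((Real.sqrt (2 * Real.pi))⁻¹)
  refine h.congr (Filter.Eventually.of_forall fun t => ?_)
  simp only []
  rw [gPDF_eq t, show ((2:ℝ)) = ((2:ℕ):ℝ) by norm_num, Real.rpow_natCast]
  ring

lemma tendsto_gPDF : Tendsto gPDF atTop (nhds 0) := by
  have h := tendsto_rpow_abs_mul_exp_neg_mul_sq_cocompact (by norm_num : (0:ℝ) < 1/2) 0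
  have h2 : Tendsto (fun x : ℝ => |x| ^ (0:ℝ) * Real.exp (-(1/2) * x ^ 2)) atTop (nhds 0) := by
    refine h.mono_left ?_
    rw [cocompact_eq_atBot_atTop]; exact le_sup_right
  have h3 := h2.const_mul ((Real.sqrt (2 * Real.pi))⁻¹)
  simp only [mul_zero] at h3
  refine h3.congr ?_
  intro x; rw [gPDF_eq, Real.rpow_zero]; ring

lemma tendsto_mul_gPDF : Tendsto (fun t => t * gPDF t) atTop (nhds 0) := by
  have h := tendsto_rpow_abs_mul_exp_neg_mul_sq_cocompact (by norm_num : (0:ℝ) < 1/2) 1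
  have h2 : Tendsto (fun x : ℝ => |x| ^ (1:ℝ) * Real.exp (-(1/2) * x ^ 2)) atTop (nhds 0) := by
    refine h.mono_left ?_
    rw [cocompact_eq_atBot_atTop]; exact le_sup_right
  have h3 := h2.const_mul ((Real.sqrt (2 * Real.pi))⁻¹)
  simp only [mul_zero] at h3
  refine (Tendsto.congr' ?_ h3)
  filter_upwards [eventually_ge_atTop (0:ℝ)] with x hx
  rw [gPDF_eq, Real.rpow_one, abs_of_nonneg hx]; ring

lemma hasDerivAt_gPDF (t : ℝ) : HasDerivAt gPDF (-(t * gPDF t)) t := by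
  have h1 : HasDerivAt (fun x : ℝ => -x ^ 2 / 2) (-t) t := by
    have := ((hasDerivAt_pow 2 t).neg).div_const 2
    refine this.congr_deriv ?_
    simp; ring
  have h2 := (h1.exp).const_mul ((Real.sqrt (2 * Real.pi))⁻¹)
  refine h2.congr_deriv ?_
  unfold gPDF; ring
lemma one_sub_gCDF (v : ℝ) : 1 - gCDF v = ∫ t in Set.Ioi v, gPDF t := by
  have h := intervalIntegral.integral_Iic_add_Ioi (b := v) (f := gPDF)
    integrable_gPDF.integrableOn integrable_gPDF.integrableOn
  rw [integral_gPDF] at *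
  unfold gCDF
  linarith [h]

lemma tail_pos (v : ℝ) : 0 < ∫ t in Set.Ioi v, gPDF t := by
  rw [MeasureTheory.setIntegral_pos_iff_support_of_nonneg_ae
    (Filter.Eventually.of_forall fun t => (gPDF_pos t).le) integrable_gPDF.integrableOn]
  have : Function.support gPDF = Set.univ := by
    ext t; simp [Function.support, (gPDF_pos t).ne']
  rw [this, Set.univ_inter, Real.volume_Ioi]
  simp

lemma first_moment (v : ℝ) : ∫ t in Set.Ioi v, t * gPDF t = gPDF v := by
  have h := MeasureTheory.integral_Ioi_of_hasDerivAt_of_tendsto'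
    (f := fun t => -gPDF t) (f' := fun t => t * gPDF t) (a := v) (m := 0)
    (fun x _ => by have := (hasDerivAt_gPDF x).neg; rw [neg_neg] at this; exact this)
    integrable_mul_gPDF.integrableOn
    (tendsto_gPDF.neg.congr (fun x => rfl) |>.mono_right (by simp [neg_zero]))
  simpa using h

lemma second_moment (v : ℝ) :
    ∫ t in Set.Ioi v, t ^ 2 * gPDF t = v * gPDF v + ∫ t in Set.Ioi v, gPDF t := by
  have hd : ∀ x : ℝ, HasDerivAt (fun t => -(t * gPDF t)) (x ^ 2 * gPDF x - gPDF x) x := by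
    intro x
    have := ((hasDerivAt_id x).mul (hasDerivAt_gPDF x)).neg
    refine this.congr_deriv ?_
    simp; ring
  have hint : MeasureTheory.IntegrableOn (fun t => t ^ 2 * gPDF t - gPDF t) (Set.Ioi v) :=
    (integrable_sq_mul_gPDF.sub integrable_gPDF).integrableOn
  have htend : Tendsto (fun t => -(t * gPDF t)) atTop (nhds 0) := by
    simpa using tendsto_mul_gPDF.neg
  have h := MeasureTheory.integral_Ioi_of_hasDerivAt_of_tendsto'
    (fun x _ => hd x) hint htend
  rw [MeasureTheory.integral_sub integrable_sq_mul_gPDF.integrableOn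
    integrable_gPDF.integrableOn] at h
  simp at h
  linarith

lemma first_moment_ge (v : ℝ) : v * (∫ t in Set.Ioi v, gPDF t) ≤ gPDF v := by
  rw [← first_moment v, ← MeasureTheory.integral_const_mul]
  refine MeasureTheory.setIntegral_mono_on
    (integrable_gPDF.integrableOn.const_mul v) integrable_mul_gPDF.integrableOn
    measurableSet_Ioi ?_
  intro t ht
  exact mul_le_mul_of_nonneg_right (le_of_lt ht) (gPDF_pos t).le

lemma cauchy_schwarz_gPDF (v : ℝ) :
    gPDF v ^ 2 ≤ (∫ t in Set.Ioi v, t ^ 2 * gPDF t) * ∫ t in Set.Ioi v, gPDF t := by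
  set μ := (volume : Measure ℝ).restrict (Set.Ioi v)
  set f : ℝ → ℝ := fun t => |t| * Real.sqrt (gPDF t)
  set g : ℝ → ℝ := fun t => Real.sqrt (gPDF t)
  have hfm : MeasureTheory.AEStronglyMeasurable f μ :=
    (continuous_abs.mul (continuous_gPDF.sqrt)).aestronglyMeasurable
  have hgm : MeasureTheory.AEStronglyMeasurable g μ :=
    continuous_gPDF.sqrt.aestronglyMeasurable
  have hf2 : ∀ t, f t ^ 2 = t ^ 2 * gPDF t := by
    intro t
    simp only [f, mul_pow, sq_abs, Real.sq_sqrt (gPDF_pos t).le]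
  have hg2 : ∀ t, g t ^ 2 = gPDF t := fun t => Real.sq_sqrt (gPDF_pos t).le
  have hfL : MeasureTheory.MemLp f (ENNReal.ofReal 2) μ := by
    rw [show ENNReal.ofReal 2 = 2 by norm_num]
    rw [MeasureTheory.memLp_two_iff_integrable_sq hfm]
    exact (integrable_sq_mul_gPDF.integrableOn).congr_fun
      (fun t _ => (hf2 t).symm) measurableSet_Ioi
  have hgL : MeasureTheory.MemLp g (ENNReal.ofReal 2) μ := by
    rw [show ENNReal.ofReal 2 = 2 by norm_num]
    rw [MeasureTheory.memLp_two_iff_integrable_sq hgm]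
    exact integrable_gPDF.integrableOn.congr_fun (fun t _ => (hg2 t).symm) measurableSet_Ioi
  have hconj : Real.HolderConjugate 2 2 := Real.HolderConjugate.two_two
  have hH := MeasureTheory.integral_mul_le_Lp_mul_Lq_of_nonneg hconj
    (Filter.Eventually.of_forall fun t => mul_nonneg (abs_nonneg t) (Real.sqrt_nonneg _))
    (Filter.Eventually.of_forall fun t => Real.sqrt_nonneg _) hfL hgL
  have hfg : ∀ t, f t * g t = |t| * gPDF t := by
    intro t
    simp only [f, g]
    rw [mul_assoc, Real.mul_self_sqrt (gPDF_pos t).le]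
  have hI2 : ∫ a, f a ^ (2:ℝ) ∂μ = ∫ t in Set.Ioi v, t ^ 2 * gPDF t := by
    refine MeasureTheory.integral_congr_ae (Filter.Eventually.of_forall fun t => ?_)
    simp only [Real.rpow_two, hf2]
  have hIg : ∫ a, g a ^ (2:ℝ) ∂μ = ∫ t in Set.Ioi v, gPDF t := by
    refine MeasureTheory.integral_congr_ae (Filter.Eventually.of_forall fun t => ?_)
    simp only [Real.rpow_two, hg2]
  rw [hI2, hIg] at hH
  have habs : ∫ a, f a * g a ∂μ = ∫ t in Set.Ioi v, |t| * gPDF t :=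
    MeasureTheory.integral_congr_ae (Filter.Eventually.of_forall fun t => hfg t)
  rw [habs] at hH
  -- gPDF v = ∫ t φ ≤ ∫ |t| φ
  have habsint : MeasureTheory.Integrable (fun t : ℝ => |t| * gPDF t) := by
    refine integrable_mul_gPDF.abs.congr (Filter.Eventually.of_forall fun t => ?_)
    simp only [abs_mul, abs_of_nonneg (gPDF_pos t).le]
  have hle : gPDF v ≤ ∫ t in Set.Ioi v, |t| * gPDF t := by
    rw [← first_moment v]
    refine MeasureTheory.setIntegral_mono_on integrable_mul_gPDF.integrableOn
      habsint.integrableOn measurableSet_Ioi ?_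
    intro t _
    exact mul_le_mul_of_nonneg_right (le_abs_self t) (gPDF_pos t).le
  set A := ∫ t in Set.Ioi v, t ^ 2 * gPDF t with hA
  set B := ∫ t in Set.Ioi v, gPDF t with hB
  have hA0 : 0 ≤ A := by
    rw [hA]
    exact MeasureTheory.setIntegral_nonneg measurableSet_Ioi
      fun t _ => mul_nonneg (sq_nonneg t) (gPDF_pos t).le
  have hB0 : 0 ≤ B := (tail_pos v).le
  rw [← Real.sqrt_eq_rpow, ← Real.sqrt_eq_rpow, ← Real.sqrt_mul hA0] at hH
  have hfinal : gPDF v ≤ Real.sqrt (A * B) := le_trans hle hH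
  have := Real.sq_sqrt (mul_nonneg hA0 hB0)
  nlinarith [Real.sqrt_nonneg (A * B), gPDF_pos v]
lemma one_sub_gCDF_pos (v : ℝ) : 0 < 1 - gCDF v := by
  rw [one_sub_gCDF]; exact tail_pos v

lemma mills_nonneg (v : ℝ) : 0 ≤ mills v :=
  div_nonneg (gPDF_pos v).le (one_sub_gCDF_pos v).le

lemma mills_sub_nonneg (v : ℝ) : 0 ≤ mills v - v := by
  have hT := one_sub_gCDF_pos v
  have h1 := first_moment_ge v
  rw [← one_sub_gCDF] at h1
  rw [sub_nonneg, mills, le_div_iff₀ hT]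
  linarith

lemma millsm_nonneg (v : ℝ) : 0 ≤ mills v * (mills v - v) :=
  mul_nonneg (mills_nonneg v) (mills_sub_nonneg v)

lemma millsm_le_one (v : ℝ) : mills v * (mills v - v) ≤ 1 := by
  have hT := one_sub_gCDF_pos v
  have hcs := cauchy_schwarz_gPDF v
  rw [second_moment, ← one_sub_gCDF] at hcs
  rw [mills]
  have key : gPDF v * (gPDF v / (1 - gCDF v) - v) ≤ 1 - gCDF v := by
    have hdiv : gPDF v / (1 - gCDF v) - v = (gPDF v - v * (1 - gCDF v)) / (1 - gCDF v) := by
      field_simp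
    rw [hdiv, mul_div_assoc', div_le_iff₀ hT]
    nlinarith [gPDF_pos v]
  rw [div_mul_eq_mul_div, div_le_one hT]
  exact key
lemma sum_sq_pair (K : ℕ) (x : Fin K → ℝ) :
    ∑ i, ∑ j, (x i * x j) ^ 2 = (∑ i, x i ^ 2) ^ 2 := by
  rw [sq (∑ i, x i ^ 2), Finset.sum_mul_sum]
  refine Finset.sum_congr rfl fun i _ => Finset.sum_congr rfl fun j _ => by ring

lemma sum_sq_blockA (K : ℕ) (x : Fin K → ℝ) (y γ : ℝ) :
    ∑ i, ∑ j, (blockA K x y γ i j) ^ 2 =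
      (∑ i, x i ^ 2) ^ 2 + 2 * y ^ 2 * (∑ i, x i ^ 2) + (γ⁻¹ ^ 2 + y ^ 2) ^ 2 := by
  simp only [blockA, Fintype.sum_sum_type, Matrix.fromBlocks_apply₁₁,
    Matrix.fromBlocks_apply₁₂, Matrix.fromBlocks_apply₂₁, Matrix.fromBlocks_apply₂₂,
    Matrix.vecMulVec_apply, Matrix.of_apply, Finset.univ_unique, Finset.sum_singleton,
    smul_eq_mul]
  rw [Finset.sum_add_distrib, sum_sq_pair]
  have h1 : ∑ i, (-(y * x i)) ^ 2 = y ^ 2 * ∑ i, x i ^ 2 := by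
    rw [Finset.mul_sum]
    exact Finset.sum_congr rfl fun i _ => by ring
  rw [h1]
  ring

lemma sum_sq_blockB (K : ℕ) (x : Fin K → ℝ) (c : ℝ) :
    ∑ i, ∑ j, (blockB K x c i j) ^ 2 =
      (∑ i, x i ^ 2) ^ 2 + 2 * c ^ 2 * (∑ i, x i ^ 2) + (c ^ 2) ^ 2 := by
  simp only [blockB, Fintype.sum_sum_type, Matrix.fromBlocks_apply₁₁,
    Matrix.fromBlocks_apply₁₂, Matrix.fromBlocks_apply₂₁, Matrix.fromBlocks_apply₂₂,
    Matrix.vecMulVec_apply, Matrix.of_apply, Finset.univ_unique, Finset.sum_singleton,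
    smul_eq_mul]
  rw [Finset.sum_add_distrib, sum_sq_pair]
  have h1 : ∑ i, (-(c * x i)) ^ 2 = c ^ 2 * ∑ i, x i ^ 2 := by
    rw [Finset.mul_sum]
    exact Finset.sum_congr rfl fun i _ => by ring
  rw [h1]
  ring

lemma frob_vecMulVec (K : ℕ) (x : Fin K → ℝ) :
    frob (Matrix.vecMulVec x x) = ∑ i, x i ^ 2 := by
  unfold frob
  simp only [Matrix.vecMulVec_apply, smul_eq_mul]
  rw [sum_sq_pair, Real.sqrt_sq (Finset.sum_nonneg fun i _ => sq_nonneg _)]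

lemma frob_truncHess_le (K : ℕ) (c y : ℝ) (x δ : Fin K → ℝ) (γ : ℝ) :
    frob (truncHess K c y x δ γ) ≤
      8 * (∑ i, x i ^ 2) + 4 * y ^ 2 + 2 * γ⁻¹ ^ 2 + 4 * c ^ 2 := by
  set v := γ * c - dotp x δ with hv
  set m := mills v * (mills v - v) with hm
  have hm0 : 0 ≤ m := millsm_nonneg v
  have hm1 : m ≤ 1 := millsm_le_one v
  set S := ∑ i, x i ^ 2 with hS
  have hS0 : 0 ≤ S := Finset.sum_nonneg fun i _ => sq_nonneg _
  have hpt : ∀ i j, (truncHess K c y x δ γ i j) ^ 2 ≤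
      2 * (blockA K x y γ i j) ^ 2 + 2 * m ^ 2 * (blockB K x c i j) ^ 2 := by
    intro i j
    have he : truncHess K c y x δ γ i j =
        -(blockA K x y γ i j) + m * blockB K x c i j := by
      simp [truncHess, Matrix.add_apply, Matrix.neg_apply, Matrix.smul_apply, smul_eq_mul, hm, hv]
    rw [he]
    nlinarith [sq_nonneg (blockA K x y γ i j + m * blockB K x c i j)]
  have hsum : ∑ i, ∑ j, (truncHess K c y x δ γ i j) ^ 2 ≤
      2 * (S ^ 2 + 2 * y ^ 2 * S + (γ⁻¹ ^ 2 + y ^ 2) ^ 2) +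
        2 * m ^ 2 * (S ^ 2 + 2 * c ^ 2 * S + (c ^ 2) ^ 2) := by
    calc ∑ i, ∑ j, (truncHess K c y x δ γ i j) ^ 2
        ≤ ∑ i, ∑ j, (2 * (blockA K x y γ i j) ^ 2 + 2 * m ^ 2 * (blockB K x c i j) ^ 2) :=
          Finset.sum_le_sum fun i _ => Finset.sum_le_sum fun j _ => hpt i j
      _ = 2 * (∑ i, ∑ j, (blockA K x y γ i j) ^ 2)
            + 2 * m ^ 2 * (∑ i, ∑ j, (blockB K x c i j) ^ 2) := by
          simp only [Finset.sum_add_distrib, Finset.mul_sum]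
      _ = _ := by rw [sum_sq_blockA, sum_sq_blockB]
  have hrhs : 2 * (S ^ 2 + 2 * y ^ 2 * S + (γ⁻¹ ^ 2 + y ^ 2) ^ 2) +
        2 * m ^ 2 * (S ^ 2 + 2 * c ^ 2 * S + (c ^ 2) ^ 2) ≤
      (8 * S + 4 * y ^ 2 + 2 * γ⁻¹ ^ 2 + 4 * c ^ 2) ^ 2 := by
    have hm2 : m ^ 2 ≤ 1 := by nlinarith
    have hbr : (0:ℝ) ≤ S ^ 2 + 2 * c ^ 2 * S + (c ^ 2) ^ 2 := by positivity
    have h3 : 2 * m ^ 2 * (S ^ 2 + 2 * c ^ 2 * S + (c ^ 2) ^ 2) ≤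
        2 * (S ^ 2 + 2 * c ^ 2 * S + (c ^ 2) ^ 2) := by nlinarith
    nlinarith [mul_nonneg hS0 (sq_nonneg y), mul_nonneg hS0 (sq_nonneg c),
      mul_nonneg hS0 (sq_nonneg γ⁻¹), mul_nonneg (sq_nonneg y) (sq_nonneg γ⁻¹),
      mul_nonneg (sq_nonneg y) (sq_nonneg c), mul_nonneg (sq_nonneg γ⁻¹) (sq_nonneg c),
      sq_nonneg S, h3]
  unfold frob
  refine le_trans (Real.sqrt_le_sqrt (le_trans hsum hrhs)) ?_
  rw [Real.sqrt_sq (by positivity)]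
lemma integrable_sq_gaussian {Ω : Type*} [MeasurableSpace Ω] (P : Measure Ω)
    [IsProbabilityMeasure P] (ε : Ω → ℝ) (hε : Measurable ε) (σ₀ : ℝ) (hσ : 0 < σ₀)
    (hgauss : Measure.map ε P = gaussianReal 0 ⟨σ₀ ^ 2, sq_nonneg σ₀⟩) :
    Integrable (fun ω => ε ω ^ 2) P := by
  set V : NNReal := ⟨σ₀ ^ 2, sq_nonneg σ₀⟩ with hV
  have hv : V ≠ 0 := by
    intro h
    have := congrArg NNReal.toReal h
    simp [hV] at this
    exact absurd (show σ₀ ^ 2 = 0 from this) (by positivity)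
  have h1 : Integrable (fun t : ℝ => t ^ 2) (gaussianReal 0 V) := by
    rw [gaussianReal_of_var_ne_zero _ hv]
    rw [integrable_withDensity_iff (measurable_gaussianPDF _ _)
      (Filter.Eventually.of_forall fun x => ENNReal.ofReal_lt_top)]
    have htr : ∀ x : ℝ, ((gaussianPDF 0 V x).toReal : ℝ) = gaussianPDFReal 0 V x := fun x =>
      ENNReal.toReal_ofReal (gaussianPDFReal_nonneg 0 V x)
    have hb : (0:ℝ) < 1 / (2 * σ₀ ^ 2) := by positivity
    have h2 := (integrable_rpow_mul_exp_neg_mul_sq hb (by norm_num : (-1:ℝ) < 2)).const_mul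
      ((Real.sqrt (2 * Real.pi * σ₀ ^ 2))⁻¹)
    refine h2.congr (Filter.Eventually.of_forall fun x => ?_)
    simp only []
    rw [htr x, gaussianPDFReal]
    have hcoe : ((V : ℝ)) = σ₀ ^ 2 := rfl
    rw [hcoe, Real.rpow_two]
    rw [show -(x - 0) ^ 2 / (2 * σ₀ ^ 2) = -(1 / (2 * σ₀ ^ 2)) * x ^ 2 by field_simp; ring]
    ring
  rw [← hgauss] at h1
  have := (integrable_map_measure
    (by exact (continuous_pow 2).aestronglyMeasurable) hε.aemeasurable).mp h1
  exact this

/-- Local dominance condition on the Hessian of the truncated regression model: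
if `E[‖X Xᵀ‖] < ∞` then there is a neighborhood `N` of `(δ₀, γ₀)` in `ℝ^K × (0,∞)`
with `E[sup_{(δ,γ) ∈ N} ‖H(Y, X; δ, γ)‖] < ∞`. -/
theorem truncated_local_dominance (K : ℕ) (hK : 0 < K) {Ω : Type*} [MeasurableSpace Ω]
    (P : Measure Ω) [IsProbabilityMeasure P]
    (X : Ω → Fin K → ℝ) (hX : Measurable X) (ε : Ω → ℝ) (hε : Measurable ε)
    (σ₀ : ℝ) (hσ : 0 < σ₀)
    (hgauss : Measure.map ε P = gaussianReal 0 ⟨σ₀ ^ 2, sq_nonneg σ₀⟩)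
    (hindep : IndepFun X ε P)
    (β₀ : Fin K → ℝ) (c : ℝ)
    (Y : Ω → ℝ) (hY : ∀ ω, Y ω = dotp (X ω) β₀ + ε ω)
    (δ₀ : Fin K → ℝ) (hδ₀ : δ₀ = fun i => β₀ i / σ₀) (γ₀ : ℝ) (hγ₀ : γ₀ = 1 / σ₀)
    (hint : Integrable (fun ω => frob (Matrix.vecMulVec (X ω) (X ω))) P) :
    ∃ N ∈ nhds ((δ₀, γ₀) : (Fin K → ℝ) × ℝ), (∀ p ∈ N, 0 < p.2) ∧
      ∫⁻ ω, ENNReal.ofReal (⨆ p ∈ N, frob (truncHess K c (Y ω) (X ω) p.1 p.2)) ∂P < ⊤ := by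
  have hγ0 : 0 < γ₀ := by rw [hγ₀]; positivity
  refine ⟨(univ : Set (Fin K → ℝ)) ×ˢ Ioi (γ₀ / 2),
    prod_mem_nhds univ_mem (Ioi_mem_nhds (by linarith)), fun p hp => ?_, ?_⟩
  · have : γ₀ / 2 < p.2 := hp.2
    linarith
  · set S : Ω → ℝ := fun ω => ∑ i, X ω i ^ 2 with hSdef
    have hS0 : ∀ ω, 0 ≤ S ω := fun ω => Finset.sum_nonneg fun i _ => sq_nonneg _
    have hSint : Integrable S P :=
      hint.congr (Filter.Eventually.of_forall fun ω => frob_vecMulVec K (X ω))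
    have hε2 : Integrable (fun ω => ε ω ^ 2) P :=
      integrable_sq_gaussian P ε hε σ₀ hσ hgauss
    have hYm : Measurable Y := by
      rw [funext hY]
      refine Measurable.add ?_ hε
      exact Finset.measurable_sum _ fun i _ => ((measurable_pi_apply i).comp hX).mul_const _
    set Cβ := ∑ i, β₀ i ^ 2 with hCb
    have hY2 : Integrable (fun ω => Y ω ^ 2) P := by
      have hbound : ∀ ω, ‖Y ω ^ 2‖ ≤ 2 * Cβ * S ω + 2 * ε ω ^ 2 := by
        intro ω
        rw [Real.norm_eq_abs, abs_of_nonneg (sq_nonneg _), hY ω]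
        have hcs := Finset.sum_mul_sq_le_sq_mul_sq Finset.univ (fun i => X ω i) fun i => β₀ i
        simp only [dotp]
        nlinarith [sq_nonneg (∑ i, X ω i * β₀ i - ε ω)]
      refine Integrable.mono' ((hSint.const_mul (2 * Cβ)).add (hε2.const_mul 2)) ?_
        (Filter.Eventually.of_forall hbound)
      exact (hYm.pow_const 2).aestronglyMeasurable
    set g : Ω → ℝ := fun ω => (8 * S ω + 4 * Y ω ^ 2) + (2 * (2 / γ₀) ^ 2 + 4 * c ^ 2)
      with hgdef
    have hgint : Integrable g P :=
      ((hSint.const_mul 8).add (hY2.const_mul 4)).add (integrable_const _)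
    have hsup : ∀ ω, (⨆ p ∈ ((univ : Set (Fin K → ℝ)) ×ˢ Ioi (γ₀ / 2)),
        frob (truncHess K c (Y ω) (X ω) p.1 p.2)) ≤ g ω := by
      intro ω
      have hg0 : 0 ≤ g ω := by
        have h1 := hS0 ω
        have h2 := sq_nonneg (Y ω)
        have h3 := sq_nonneg (2 / γ₀)
        have h4 := sq_nonneg c
        simp only [hgdef]
        linarith
      refine Real.iSup_le (fun p => Real.iSup_le (fun hp => ?_) hg0) hg0
      have hpγ : γ₀ / 2 < p.2 := hp.2
      have h1 := frob_truncHess_le K c (Y ω) (X ω) p.1 p.2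
      have hinv : p.2⁻¹ ≤ 2 / γ₀ := by
        have := inv_anti₀ (show (0:ℝ) < γ₀ / 2 by linarith) hpγ.le
        rwa [inv_div] at this
      have hinv2 : p.2⁻¹ ^ 2 ≤ (2 / γ₀) ^ 2 :=
        pow_le_pow_left₀ (inv_nonneg.mpr (by linarith)) hinv 2
      refine le_trans h1 ?_
      simp only [hgdef]
      linarith
    calc ∫⁻ ω, ENNReal.ofReal (⨆ p ∈ ((univ : Set (Fin K → ℝ)) ×ˢ Ioi (γ₀ / 2)),
            frob (truncHess K c (Y ω) (X ω) p.1 p.2)) ∂P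
        ≤ ∫⁻ ω, ENNReal.ofReal (g ω) ∂P :=
          lintegral_mono fun ω => ENNReal.ofReal_le_ofReal (hsup ω)
      _ ≤ ∫⁻ ω, ‖g ω‖ₑ ∂P := lintegral_mono fun ω => Real.ofReal_le_enorm (g ω)
      _ < ⊤ := hgint.2
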